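/- arXiv:1707.00917 — 6 statements merged into one kernel-verified Lean document; each statement's English description precedes it below -/
import Mathlib

section
/- The maximum of G(d₀, d₁, …, d_m) over the admissible region 0 ≤ d₀ ≤ c₁, 0 ≤ d₁ ≤ c₁, 0 ≤ d_i ≤ c_i (2 ≤ i ≤ m) is attained at d₀ = d₁ = c₁, d_i = c_i (i ≥ 2), and equals f(c₁, …, c_m) := E[C·1{C≤c₁}] + c₁q₁ + c₂q₂ + ⋯ + c_m q_m. -/
open MeasureTheory

theorem stmt_5 {Ω : Type*} [MeasurableSpace Ω] (μ : Measure Ω) [IsProbabilityMeasure μ]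
    (C : Ω → ℝ) (hCm : Measurable C) (hCnn : ∀ ω, 0 ≤ C ω) (hInt : Integrable C μ)
    (hFcont : Continuous fun x => (μ {ω | C ω ≤ x}).toReal)
    (m : ℕ) (hm : 1 ≤ m) (c : ℕ → ℝ) (hc1 : 0 < c 1)
    (hcmono : ∀ i, 1 ≤ i → i < m → c i < c (i + 1))
    (q : ℕ → ℝ)
    (hq0 : q 0 = (μ {ω | C ω ≤ c 1}).toReal)
    (hqi : ∀ i, 1 ≤ i → i < m → q i = (μ {ω | c i < C ω ∧ C ω ≤ c (i + 1)}).toReal)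
    (hqm : q m = (μ {ω | c m < C ω}).toReal)
    (G : (ℕ → ℝ) → ℝ)
    (hG : ∀ d : ℕ → ℝ, G d = (∫ ω in {ω | C ω ≤ d 0}, C ω ∂μ) +
      d 0 * (q 0 - (μ {ω | C ω ≤ d 0}).toReal) + ∑ i ∈ Finset.Icc 1 m, d i * q i)
    (f : ℝ)
    (hf : f = (∫ ω in {ω | C ω ≤ c 1}, C ω ∂μ) + ∑ i ∈ Finset.Icc 1 m, c i * q i) :
    (∀ d : ℕ → ℝ, (0 ≤ d 0 ∧ d 0 ≤ c 1 ∧ 0 ≤ d 1 ∧ d 1 ≤ c 1 ∧ ∀ i, 2 ≤ i → i ≤ m → 0 ≤ d i ∧ d i ≤ c i) → G d ≤ f) ∧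
      G (fun i => if i ≤ 1 then c 1 else c i) = f := by
  have hqnn : ∀ i ∈ Finset.Icc 1 m, 0 ≤ q i := by
    intro i hi
    simp only [Finset.mem_Icc] at hi
    rcases eq_or_lt_of_le hi.2 with h | h
    · rw [h, hqm]; exact ENNReal.toReal_nonneg
    · rw [hqi i hi.1 h]; exact ENNReal.toReal_nonneg
  constructor
  · intro d ⟨hd0, hd0c, hd1, hd1c, hdi⟩
    rw [hG, hf]
    -- sets
    set S1 : Set Ω := {ω | C ω ≤ d 0} with hS1
    set S2 : Set Ω := {ω | d 0 < C ω ∧ C ω ≤ c 1} with hS2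
    have mS1 : MeasurableSet S1 := hCm measurableSet_Iic
    have mS2 : MeasurableSet S2 :=
      (hCm measurableSet_Ioi).inter (hCm measurableSet_Iic)
    have hdisj : Disjoint S1 S2 := by
      rw [Set.disjoint_left]
      intro ω h1 h2
      exact absurd h1 (not_le.mpr h2.1)
    have hunion : {ω | C ω ≤ c 1} = S1 ∪ S2 := by
      ext ω
      simp only [Set.mem_setOf_eq, Set.mem_union, hS1, hS2, Set.mem_setOf_eq]
      constructor
      · intro h
        rcases le_or_gt (C ω) (d 0) with h' | h'
        · exact Or.inl h'
        · exact Or.inr ⟨h', h⟩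
      · rintro (h | h)
        · exact h.trans hd0c
        · exact h.2
    have hIntOn : ∀ s : Set Ω, IntegrableOn C s μ := fun s => hInt.integrableOn
    have hsplit : (∫ ω in {ω | C ω ≤ c 1}, C ω ∂μ)
        = (∫ ω in S1, C ω ∂μ) + (∫ ω in S2, C ω ∂μ) := by
      rw [hunion]
      exact setIntegral_union hdisj mS2 (hIntOn S1) (hIntOn S2)
    have hmeas : (μ {ω | C ω ≤ c 1}).toReal = (μ S1).toReal + (μ S2).toReal := by
      rw [hunion, measure_union hdisj mS2,
        ENNReal.toReal_add (measure_ne_top μ S1) (measure_ne_top μ S2)]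
    have hkey : d 0 * (q 0 - (μ S1).toReal) ≤ ∫ ω in S2, C ω ∂μ := by
      rw [hq0, hmeas]
      have : d 0 * ((μ S1).toReal + (μ S2).toReal - (μ S1).toReal)
          = ∫ _ in S2, d 0 ∂μ := by
        rw [setIntegral_const, smul_eq_mul, measureReal_def]; ring
      rw [this]
      refine setIntegral_mono_on (integrableOn_const (measure_ne_top μ S2))
        (hIntOn S2) mS2 ?_
      intro ω hω
      exact le_of_lt hω.1
    have hsum : ∑ i ∈ Finset.Icc 1 m, d i * q i ≤ ∑ i ∈ Finset.Icc 1 m, c i * q i := by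
      refine Finset.sum_le_sum fun i hi => ?_
      refine mul_le_mul_of_nonneg_right ?_ (hqnn i hi)
      simp only [Finset.mem_Icc] at hi
      rcases eq_or_lt_of_le hi.1 with h | h
      · rw [← h]; exact hd1c
      · exact (hdi i h hi.2).2
    calc (∫ ω in S1, C ω ∂μ) + d 0 * (q 0 - (μ S1).toReal) + ∑ i ∈ Finset.Icc 1 m, d i * q i
        ≤ (∫ ω in S1, C ω ∂μ) + (∫ ω in S2, C ω ∂μ) + ∑ i ∈ Finset.Icc 1 m, c i * q i := by
          gcongr
      _ = (∫ ω in {ω | C ω ≤ c 1}, C ω ∂μ) + ∑ i ∈ Finset.Icc 1 m, c i * q i := by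
          rw [hsplit]
  · rw [hG, hf]
    simp only [Nat.zero_le, if_pos, Nat.le_refl]
    rw [hq0, sub_self, mul_zero, add_zero]
    congr 1
    refine Finset.sum_congr rfl fun i hi => ?_
    simp only [Finset.mem_Icc] at hi
    rcases eq_or_lt_of_le hi.1 with h | h
    · rw [← h]; simp
    · have : ¬ i ≤ 1 := by omega
      rw [if_neg this]
end

section
/- If α·E[C] = G(d₀, …, d_m) has a solution with deductibles in the admissible region, then necessarily α ≤ f(c₁, …, c_m)/E[C] < 1. -/
open MeasureTheory

theorem stmt_7 {Ω : Type*} [MeasurableSpace Ω] (μ : Measure Ω) [IsProbabilityMeasure μ]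
    (C : Ω → ℝ) (hCm : Measurable C) (hCnn : ∀ ω, 0 ≤ C ω) (hInt : Integrable C μ)
    (hFcont : Continuous fun x => (μ {ω | C ω ≤ x}).toReal)
    (m : ℕ) (hm : 1 ≤ m) (c : ℕ → ℝ) (hc1 : 0 < c 1)
    (hcmono : ∀ i, 1 ≤ i → i < m → c i < c (i + 1))
    (q : ℕ → ℝ)
    (hq0 : q 0 = (μ {ω | C ω ≤ c 1}).toReal)
    (hqi : ∀ i, 1 ≤ i → i < m → q i = (μ {ω | c i < C ω ∧ C ω ≤ c (i + 1)}).toReal)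
    (hqm : q m = (μ {ω | c m < C ω}).toReal)
    (G : (ℕ → ℝ) → ℝ)
    (hG : ∀ d : ℕ → ℝ, G d = (∫ ω in {ω | C ω ≤ d 0}, C ω ∂μ) +
      d 0 * (q 0 - (μ {ω | C ω ≤ d 0}).toReal) + ∑ i ∈ Finset.Icc 1 m, d i * q i)
    (f : ℝ)
    (hf : f = (∫ ω in {ω | C ω ≤ c 1}, C ω ∂μ) + ∑ i ∈ Finset.Icc 1 m, c i * q i)
    (hq0pos : 0 < q 0) (hqipos : ∀ i, 1 ≤ i → i < m → 0 < q i) (hqmpos : 0 < q m)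
    (hEpos : 0 < ∫ ω, C ω ∂μ)
    (α : ℝ)
    (hsol : ∃ d : ℕ → ℝ, (0 ≤ d 0 ∧ d 0 ≤ c 1 ∧ 0 ≤ d 1 ∧ d 1 ≤ c 1 ∧ ∀ i, 2 ≤ i → i ≤ m → 0 ≤ d i ∧ d i ≤ c i) ∧ α * (∫ ω, C ω ∂μ) = G d) :
    α ≤ f / (∫ ω, C ω ∂μ) ∧ f / (∫ ω, C ω ∂μ) < 1 := by
  obtain ⟨d, ⟨hd00, hd0c, hd10, hd1c, hdic⟩, heq⟩ := hsol
  have hmeasle : ∀ x : ℝ, MeasurableSet {ω | C ω ≤ x} := fun x =>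
    measurableSet_le hCm measurable_const
  have hmeasS : ∀ a b : ℝ, MeasurableSet {ω | a < C ω ∧ C ω ≤ b} := fun a b =>
    (measurableSet_lt measurable_const hCm).inter (measurableSet_le hCm measurable_const)
  have hint : ∀ s : Set Ω, IntegrableOn C s μ := fun s => hInt.integrableOn
  have hfin : ∀ s : Set Ω, μ s ≠ ⊤ := fun s => measure_ne_top μ s
  have hdisj : ∀ a b : ℝ, Disjoint {ω | C ω ≤ a} {ω | a < C ω ∧ C ω ≤ b} := by
    intro a b; rw [Set.disjoint_left]; rintro ω h1 ⟨h2, _⟩; exact absurd h1 (not_le.mpr h2)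
  have hunion : ∀ a b : ℝ, a ≤ b → {ω | C ω ≤ a} ∪ {ω | a < C ω ∧ C ω ≤ b} = {ω | C ω ≤ b} := by
    intro a b hab; ext ω; simp only [Set.mem_union, Set.mem_setOf_eq]; constructor
    · rintro (h | ⟨_, h⟩); exacts [h.trans hab, h]
    · intro h; rcases le_or_gt (C ω) a with h' | h'; exacts [Or.inl h', Or.inr ⟨h', h⟩]
  have hsplitI : ∀ a b : ℝ, a ≤ b → (∫ ω in {ω | C ω ≤ b}, C ω ∂μ) =
      (∫ ω in {ω | C ω ≤ a}, C ω ∂μ) + ∫ ω in {ω | a < C ω ∧ C ω ≤ b}, C ω ∂μ := by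
    intro a b hab
    rw [← hunion a b hab, setIntegral_union (hdisj a b) (hmeasS a b) (hint _) (hint _)]
  have hsplitM : ∀ a b : ℝ, a ≤ b → (μ {ω | a < C ω ∧ C ω ≤ b}).toReal =
      (μ {ω | C ω ≤ b}).toReal - (μ {ω | C ω ≤ a}).toReal := by
    intro a b hab
    have h := measure_union (μ := μ) (hdisj a b) (hmeasS a b)
    rw [hunion a b hab] at h
    rw [h, ENNReal.toReal_add (hfin _) (hfin _)]; ring
  have hlow : ∀ a b : ℝ, a * (μ {ω | a < C ω ∧ C ω ≤ b}).toReal ≤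
      ∫ ω in {ω | a < C ω ∧ C ω ≤ b}, C ω ∂μ := by
    intro a b
    have := setIntegral_ge_of_const_le (hmeasS a b) (hfin _) (fun ω hω => le_of_lt hω.1) (hint _)
    rw [smul_eq_mul, mul_comm] at this; exact this
  have hind : ∀ k, 1 ≤ k → k ≤ m → (∫ ω in {ω | C ω ≤ c 1}, C ω ∂μ) +
      ∑ i ∈ Finset.Icc 1 (k-1), c i * q i ≤ ∫ ω in {ω | C ω ≤ c k}, C ω ∂μ := by
    intro k hk1
    induction k, hk1 using Nat.le_induction with
    | base => intro _; simp
    | succ k hk ih =>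
      intro hkm
      have hkm2 : k < m := Nat.lt_of_succ_le hkm
      have hcc : c k ≤ c (k+1) := (hcmono k hk hkm2).le
      rw [hsplitI (c k) (c (k+1)) hcc]
      have h1 := ih (le_of_lt hkm2)
      have h2 : c k * q k ≤ ∫ ω in {ω | c k < C ω ∧ C ω ≤ c (k+1)}, C ω ∂μ := by
        rw [hqi k hk hkm2]; exact hlow (c k) (c (k+1))
      have hsum : ∑ i ∈ Finset.Icc 1 (k+1-1), c i * q i =
          ∑ i ∈ Finset.Icc 1 (k-1), c i * q i + c k * q k := by
        have hk' : k + 1 - 1 = (k-1) + 1 := by omega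
        have hk'' : (k-1) + 1 = k := by omega
        rw [hk', Finset.sum_Icc_succ_top (by omega), hk'']
      rw [hsum]; linarith
  have hTmeas : MeasurableSet {ω | c m < C ω} := measurableSet_lt measurable_const hCm
  have hTpos : μ {ω | c m < C ω} ≠ 0 := by
    intro h; rw [hqm, h] at hqmpos; simp at hqmpos
  have hstrict : c m * q m < ∫ ω in {ω | c m < C ω}, C ω ∂μ := by
    have hconst : IntegrableOn (fun _ : Ω => c m) {ω | c m < C ω} μ := by
      refine (integrableOn_const_iff (C := c m)).mpr (Or.inr ?_)
      exact lt_of_le_of_ne (le_top) (hfin _)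
    have hpos : 0 < ∫ ω in {ω | c m < C ω}, (C ω - c m) ∂μ := by
      rw [setIntegral_pos_iff_support_of_nonneg_ae
        (ae_restrict_of_forall_mem hTmeas (fun ω hω => le_of_lt (sub_pos.mpr hω)))
        ((hint _).sub hconst)]
      refine lt_of_lt_of_le (pos_iff_ne_zero.mpr hTpos) (measure_mono ?_)
      exact fun ω hω => ⟨ne_of_gt (sub_pos.mpr hω), hω⟩
    have heqI : ∫ ω in {ω | c m < C ω}, (C ω - c m) ∂μ =
        (∫ ω in {ω | c m < C ω}, C ω ∂μ) - (μ {ω | c m < C ω}).toReal * c m := by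
      rw [integral_sub (hint _) hconst, setIntegral_const]; rfl
    rw [hqm]; rw [heqI] at hpos; linarith
  have hfE : f < ∫ ω, C ω ∂μ := by
    have h1 := hind m hm le_rfl
    have hu : {ω | C ω ≤ c m} ∪ {ω | c m < C ω} = Set.univ := by
      ext ω; simp [le_or_gt]
    have hd : Disjoint {ω | C ω ≤ c m} {ω | c m < C ω} := by
      rw [Set.disjoint_left]; intro ω h1 h2
      simp only [Set.mem_setOf_eq] at h1 h2
      exact absurd h1 (not_le.mpr h2)
    have hsplitE : (∫ ω, C ω ∂μ) = (∫ ω in {ω | C ω ≤ c m}, C ω ∂μ) +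
        ∫ ω in {ω | c m < C ω}, C ω ∂μ := by
      rw [← setIntegral_univ (f := fun ω => C ω) (μ := μ), ← hu,
        setIntegral_union hd hTmeas (hint _) (hint _)]
    have hsum : ∑ i ∈ Finset.Icc 1 m, c i * q i =
        ∑ i ∈ Finset.Icc 1 (m-1), c i * q i + c m * q m := by
      have hm' : (m-1) + 1 = m := by omega
      rw [← hm', Finset.sum_Icc_succ_top (by omega)]
      simp
    rw [hf, hsum, hsplitE]; linarith
  have hGf : G d ≤ f := by
    have hA : (∫ ω in {ω | C ω ≤ d 0}, C ω ∂μ) +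
        d 0 * (q 0 - (μ {ω | C ω ≤ d 0}).toReal) ≤ ∫ ω in {ω | C ω ≤ c 1}, C ω ∂μ := by
      rw [hsplitI (d 0) (c 1) hd0c, hq0]
      have h := hlow (d 0) (c 1)
      rw [hsplitM (d 0) (c 1) hd0c] at h
      linarith
    have hB : ∑ i ∈ Finset.Icc 1 m, d i * q i ≤ ∑ i ∈ Finset.Icc 1 m, c i * q i := by
      apply Finset.sum_le_sum
      intro i hi
      simp only [Finset.mem_Icc] at hi
      have hq : 0 ≤ q i := by
        rcases eq_or_lt_of_le hi.2 with h | h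
        · exact h ▸ hqmpos.le
        · exact (hqipos i hi.1 h).le
      have hdi : d i ≤ c i := by
        rcases Nat.lt_or_ge i 2 with h2 | h2
        · have hi1 : i = 1 := by omega
          rw [hi1]; exact hd1c
        · exact (hdic i h2 hi.2).2
      exact mul_le_mul_of_nonneg_right hdi hq
    rw [hG d, hf]; linarith
  constructor
  · rw [le_div_iff₀ hEpos, heq]; exact hGf
  · exact (div_lt_one hEpos).mpr hfE
end

section
/- Fix α with 0 ≤ α ≤ f(c₁,…,c_m)/E[C]. Then there exist admissible deductibles d₀, d₁, …, d_m (with 0 ≤ d₀, d₁ ≤ c₁, 0 ≤ d_i ≤ c_i for i ≥ 2, and d₀ ≤ d₁ ≤ ⋯ ≤ d_m) such that α·E[C] = G(d₀, …, d_m). -/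
open MeasureTheory

theorem stmt_8 {Ω : Type*} [MeasurableSpace Ω] (μ : Measure Ω) [IsProbabilityMeasure μ]
    (C : Ω → ℝ) (hCm : Measurable C) (hCnn : ∀ ω, 0 ≤ C ω) (hInt : Integrable C μ)
    (hFcont : Continuous fun x => (μ {ω | C ω ≤ x}).toReal)
    (m : ℕ) (hm : 1 ≤ m) (c : ℕ → ℝ) (hc1 : 0 < c 1)
    (hcmono : ∀ i, 1 ≤ i → i < m → c i < c (i + 1))
    (q : ℕ → ℝ)
    (hq0 : q 0 = (μ {ω | C ω ≤ c 1}).toReal)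
    (hqi : ∀ i, 1 ≤ i → i < m → q i = (μ {ω | c i < C ω ∧ C ω ≤ c (i + 1)}).toReal)
    (hqm : q m = (μ {ω | c m < C ω}).toReal)
    (G : (ℕ → ℝ) → ℝ)
    (hG : ∀ d : ℕ → ℝ, G d = (∫ ω in {ω | C ω ≤ d 0}, C ω ∂μ) +
      d 0 * (q 0 - (μ {ω | C ω ≤ d 0}).toReal) + ∑ i ∈ Finset.Icc 1 m, d i * q i)
    (f : ℝ)
    (hf : f = (∫ ω in {ω | C ω ≤ c 1}, C ω ∂μ) + ∑ i ∈ Finset.Icc 1 m, c i * q i)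
    (hq0pos : 0 < q 0) (hqipos : ∀ i, 1 ≤ i → i < m → 0 < q i) (hqmpos : 0 < q m)
    (hEpos : 0 < ∫ ω, C ω ∂μ)
    (α : ℝ) (hα0 : 0 ≤ α) (hαf : α ≤ f / (∫ ω, C ω ∂μ)) :
    ∃ d : ℕ → ℝ, (0 ≤ d 0 ∧ d 0 ≤ c 1 ∧ 0 ≤ d 1 ∧ d 1 ≤ c 1 ∧ ∀ i, 2 ≤ i → i ≤ m → 0 ≤ d i ∧ d i ≤ c i) ∧ (∀ i, i < m → d i ≤ d (i + 1)) ∧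
      α * (∫ ω, C ω ∂μ) = G d := by
  set F : ℝ → ℝ := fun x => (μ {ω | C ω ≤ x}).toReal with hF
  set I : ℝ → ℝ := fun x => ∫ ω in {ω | C ω ≤ x}, C ω ∂μ with hI
  have meas : ∀ x : ℝ, MeasurableSet {ω | C ω ≤ x} := fun x =>
    measurableSet_le hCm measurable_const
  have smeas : ∀ x y : ℝ, MeasurableSet {ω | x < C ω ∧ C ω ≤ y} := fun x y =>
    (measurableSet_lt measurable_const hCm).inter (measurableSet_le hCm measurable_const)
  -- decomposition
  have hun : ∀ x y : ℝ, x ≤ y →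
      {ω | C ω ≤ y} = {ω | C ω ≤ x} ∪ {ω | x < C ω ∧ C ω ≤ y} := by
    intro x y hxy
    ext ω
    simp only [Set.mem_setOf_eq, Set.mem_union]
    constructor
    · intro h
      rcases le_or_gt (C ω) x with h' | h'
      · exact Or.inl h'
      · exact Or.inr ⟨h', h⟩
    · rintro (h | ⟨_, h⟩)
      · exact h.trans hxy
      · exact h
  have hdisj : ∀ x y : ℝ, Disjoint {ω | C ω ≤ x} {ω | x < C ω ∧ C ω ≤ y} := by
    intro x y
    refine Set.disjoint_left.mpr ?_
    intro ω h1 h2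
    exact absurd h2.1 (not_lt.mpr h1)
  have hFmono : ∀ x y : ℝ, x ≤ y → F x ≤ F y := by
    intro x y hxy
    refine ENNReal.toReal_le_toReal (measure_ne_top μ _) (measure_ne_top μ _) |>.mpr ?_
    exact measure_mono (fun ω hω => le_trans hω hxy)
  have hsplit : ∀ x y : ℝ, x ≤ y →
      I y = I x + ∫ ω in {ω | x < C ω ∧ C ω ≤ y}, C ω ∂μ := by
    intro x y hxy
    have := setIntegral_union (μ := μ) (f := C) (hdisj x y) (smeas x y)
      hInt.integrableOn hInt.integrableOn
    rw [hI]
    simp only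
    rw [hun x y hxy, this]
  have hstripm : ∀ x y : ℝ, x ≤ y →
      (μ {ω | x < C ω ∧ C ω ≤ y}).toReal = F y - F x := by
    intro x y hxy
    have hm2 : μ {ω | C ω ≤ y} = μ {ω | C ω ≤ x} + μ {ω | x < C ω ∧ C ω ≤ y} := by
      rw [hun x y hxy, measure_union (hdisj x y) (smeas x y)]
    have : F y = F x + (μ {ω | x < C ω ∧ C ω ≤ y}).toReal := by
      rw [hF]; simp only
      rw [hm2, ENNReal.toReal_add (measure_ne_top μ _) (measure_ne_top μ _)]
    linarith
  have hkey : ∀ x y : ℝ, x ≤ y → |I y - I x| ≤ |y| * (F y - F x) := by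
    intro x y hxy
    rw [hsplit x y hxy]
    have hb : ∀ ω ∈ {ω | x < C ω ∧ C ω ≤ y}, ‖C ω‖ ≤ |y| := by
      intro ω hω
      rw [Real.norm_eq_abs, abs_of_nonneg (hCnn ω)]
      exact le_trans hω.2 (le_abs_self y)
    have := norm_setIntegral_le_of_norm_le_const (μ := μ)
      (s := {ω | x < C ω ∧ C ω ≤ y}) (f := C) (C := |y|)
      (measure_lt_top μ _) hb
    rw [measureReal_def, hstripm x y hxy] at this
    simpa [Real.norm_eq_abs, add_sub_cancel_left] using this
  -- continuity of I
  have Icont : Continuous I := by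
    rw [continuous_iff_continuousAt]
    intro a
    rw [ContinuousAt, tendsto_iff_dist_tendsto_zero]
    have hev1 : ∀ᶠ x in nhds a, |x - a| ≤ 1 := by
      have h1 : Metric.closedBall a 1 ∈ nhds a := Metric.closedBall_mem_nhds a one_pos
      filter_upwards [h1] with x hx
      simpa [Real.dist_eq] using hx
    have hev2 : ∀ᶠ x in nhds a, dist (I x) (I a) ≤ (|a| + 1) * |F x - F a| := by
      filter_upwards [hev1] with x hx
      rw [Real.dist_eq]
      rcases le_total x a with h | h
      · have := hkey x a h
        have hFle : F x ≤ F a := hFmono x a h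
        calc |I x - I a| = |I a - I x| := by rw [abs_sub_comm]
          _ ≤ |a| * (F a - F x) := this
          _ ≤ (|a| + 1) * (F a - F x) := by nlinarith [abs_nonneg a]
          _ = (|a| + 1) * |F x - F a| := by
              rw [abs_sub_comm (F x) (F a), abs_of_nonneg (sub_nonneg.mpr hFle)]
      · have := hkey a x h
        have hFle : F a ≤ F x := hFmono a x h
        have hxb : |x| ≤ |a| + 1 := by
          calc |x| = |a + (x - a)| := by ring_nf
            _ ≤ |a| + |x - a| := abs_add_le _ _
            _ ≤ |a| + 1 := by linarith
        calc |I x - I a| ≤ |x| * (F x - F a) := this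
          _ ≤ (|a| + 1) * (F x - F a) := by nlinarith
          _ = (|a| + 1) * |F x - F a| := by
              rw [abs_of_nonneg (sub_nonneg.mpr hFle)]
    have hg : Filter.Tendsto (fun x => (|a| + 1) * |F x - F a|) (nhds a) (nhds 0) := by
      have hc : Continuous fun x => (|a| + 1) * |F x - F a| :=
        continuous_const.mul ((hFcont.sub continuous_const).abs)
      have := hc.tendsto a
      simpa using this
    exact squeeze_zero' (Filter.Eventually.of_forall fun x => dist_nonneg) hev2 hg
  -- the path function
  set S : ℝ := ∑ i ∈ Finset.Icc 1 m, c i * q i with hS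
  set h : ℝ → ℝ := fun t => I (t * c 1) + t * c 1 * (q 0 - F (t * c 1)) + t * S with hh
  have hcont : Continuous h := by
    apply Continuous.add
    apply Continuous.add
    · exact Icont.comp (continuous_id.mul continuous_const)
    · exact (continuous_id.mul continuous_const).mul
        (continuous_const.sub (hFcont.comp (continuous_id.mul continuous_const)))
    · exact continuous_id.mul continuous_const
  have hI0 : I 0 = 0 := by
    rw [hI]
    simp only
    have heq : ∀ ω ∈ {ω | C ω ≤ (0:ℝ)}, C ω = 0 := fun ω hω => le_antisymm hω (hCnn ω)
    rw [setIntegral_congr_fun (meas 0) heq]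
    simp
  have hh0 : h 0 = 0 := by
    rw [hh]; simp [hI0]
  have hh1 : h 1 = f := by
    rw [hh]; simp only [one_mul]
    rw [hf, hq0]
    have : q 0 - F (c 1) = 0 := by rw [hq0, hF]; ring_nf
    rw [hq0] at this
    simp [hF, hI]
  -- IVT
  have hmem : α * (∫ ω, C ω ∂μ) ∈ Set.Icc (h 0) (h 1) := by
    rw [hh0, hh1]
    constructor
    · exact mul_nonneg hα0 hEpos.le
    · exact (le_div_iff₀ hEpos).mp hαf
  obtain ⟨t, ht01, ht⟩ := intermediate_value_Icc (zero_le_one) hcont.continuousOn hmem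
  obtain ⟨ht0, ht1⟩ := ht01
  -- cumulative monotonicity of c
  have cmono : ∀ j, j ≤ m → ∀ i, 1 ≤ i → i ≤ j → c i ≤ c j := by
    intro j
    induction j with
    | zero => intro _ i hi hij; omega
    | succ n ih =>
      intro hn i hi hij
      rcases eq_or_lt_of_le hij with hEq | hLt
      · rw [hEq]
      · have hin : i ≤ n := by omega
        have h1n : 1 ≤ n := le_trans hi hin
        calc c i ≤ c n := ih (by omega) i hi hin
          _ ≤ c (n + 1) := (hcmono n h1n (by omega)).le
  have cpos : ∀ i, 1 ≤ i → i ≤ m → 0 < c i := by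
    intro i h1 h2
    exact lt_of_lt_of_le hc1 (cmono i h2 1 le_rfl h1)
  refine ⟨fun i => t * c (max i 1), ?_, ?_, ?_⟩
  · refine ⟨?_, ?_, ?_, ?_, ?_⟩
    · simpa using mul_nonneg ht0 hc1.le
    · simpa using mul_le_of_le_one_left hc1.le ht1
    · simpa using mul_nonneg ht0 hc1.le
    · simpa using mul_le_of_le_one_left hc1.le ht1
    · intro i h2i him
      have hmax : i ⊔ 1 = i := by omega
      simp only [hmax]
      have hci : 0 < c i := cpos i (by omega) him
      exact ⟨mul_nonneg ht0 hci.le, mul_le_of_le_one_left hci.le ht1⟩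
  · intro i him
    rcases Nat.eq_zero_or_pos i with h0 | hpos
    · subst h0; simp
    · have h1 : i ⊔ 1 = i := by omega
      have h2 : (i + 1) ⊔ 1 = i + 1 := by omega
      simp only [h1, h2]
      exact mul_le_mul_of_nonneg_left (hcmono i hpos him).le ht0
  · rw [hG]
    have hz : (0:ℕ) ⊔ 1 = 1 := by omega
    simp only [hz]
    have hsum : ∑ i ∈ Finset.Icc 1 m, t * c (i ⊔ 1) * q i = t * S := by
      rw [hS, Finset.mul_sum]
      refine Finset.sum_congr rfl ?_
      intro i hi
      rw [Finset.mem_Icc] at hi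
      have hmx : i ⊔ 1 = i := by omega
      rw [hmx]; ring
    rw [hsum, ← ht, hh]
end

section
/- The function h(y) = 1 − e^{−y} − 2y e^{−2y} + y e^{−3y} − (y²/2) e^{−3y} satisfies h(y) ≥ 0 for all y ≥ 0, with h(0) = 0. -/
noncomputable def hf (y : ℝ) : ℝ :=
  1 - Real.exp (-y) - 2 * y * Real.exp (-2 * y) + y * Real.exp (-3 * y)
    - y ^ 2 / 2 * Real.exp (-3 * y)

lemma hf_deriv (y : ℝ) :
    HasDerivAt hf
      (((Real.exp y - 1) ^ 2 + 4 * y * (Real.exp y - 1) + 3 / 2 * y ^ 2)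
        * Real.exp (-3 * y)) y := by
  have dn : HasDerivAt (fun x : ℝ => -x) (-1) y := (hasDerivAt_id y).neg
  have d1 : HasDerivAt (fun x : ℝ => Real.exp (-x)) (Real.exp (-y) * (-1)) y := dn.exp
  have dn2 : HasDerivAt (fun x : ℝ => -2 * x) (-2) y := by
    simpa using (hasDerivAt_id y).const_mul (-2 : ℝ)
  have d2e : HasDerivAt (fun x : ℝ => Real.exp (-2 * x)) (Real.exp (-2 * y) * (-2)) y := dn2.exp
  have dn3 : HasDerivAt (fun x : ℝ => -3 * x) (-3) y := by
    simpa using (hasDerivAt_id y).const_mul (-3 : ℝ)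
  have d3e : HasDerivAt (fun x : ℝ => Real.exp (-3 * x)) (Real.exp (-3 * y) * (-3)) y := dn3.exp
  have dy : HasDerivAt (fun x : ℝ => 2 * x) (2) y := by
    simpa using (hasDerivAt_id y).const_mul (2 : ℝ)
  have d2 : HasDerivAt (fun x : ℝ => 2 * x * Real.exp (-2 * x))
      (2 * Real.exp (-2 * y) + 2 * y * (Real.exp (-2 * y) * (-2))) y := dy.mul d2e
  have d3 : HasDerivAt (fun x : ℝ => x * Real.exp (-3 * x))
      (1 * Real.exp (-3 * y) + y * (Real.exp (-3 * y) * (-3))) y :=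
    (hasDerivAt_id y).mul d3e
  have dsq : HasDerivAt (fun x : ℝ => x ^ 2 / 2) y y := by
    simpa using ((hasDerivAt_pow 2 y).div_const 2)
  have d4 : HasDerivAt (fun x : ℝ => x ^ 2 / 2 * Real.exp (-3 * x))
      (y * Real.exp (-3 * y) + y ^ 2 / 2 * (Real.exp (-3 * y) * (-3))) y := dsq.mul d3e
  have dall := (((hasDerivAt_const y (1:ℝ)).sub d1).sub d2).add d3 |>.sub d4
  have key : 0 - Real.exp (-y) * (-1) - (2 * Real.exp (-2 * y) + 2 * y * (Real.exp (-2 * y) * (-2)))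
      + (1 * Real.exp (-3 * y) + y * (Real.exp (-3 * y) * (-3)))
      - (y * Real.exp (-3 * y) + y ^ 2 / 2 * (Real.exp (-3 * y) * (-3)))
      = ((Real.exp y - 1) ^ 2 + 4 * y * (Real.exp y - 1) + 3 / 2 * y ^ 2) * Real.exp (-3 * y) := by
    have e1 : Real.exp (-y) = Real.exp y * Real.exp y * Real.exp (-3 * y) := by
      rw [← Real.exp_add, ← Real.exp_add]; ring_nf
    have e2 : Real.exp (-2 * y) = Real.exp y * Real.exp (-3 * y) := by
      rw [← Real.exp_add]; ring_nf
    rw [e1, e2]; ring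
  rw [key] at dall
  exact dall.congr_of_eventuallyEq (by filter_upwards with x; simp [hf])

theorem stmt_11 :
    (1 - Real.exp (-(0:ℝ)) - 2 * 0 * Real.exp (-2 * 0) + 0 * Real.exp (-3 * 0)
      - (0:ℝ) ^ 2 / 2 * Real.exp (-3 * 0) = 0) ∧
    ∀ y : ℝ, 0 ≤ y →
      0 ≤ 1 - Real.exp (-y) - 2 * y * Real.exp (-2 * y) + y * Real.exp (-3 * y)
        - y ^ 2 / 2 * Real.exp (-3 * y) := by
  constructor
  · simp
  · intro y hy
    have mono : MonotoneOn hf (Set.Ici 0) := by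
      apply monotoneOn_of_deriv_nonneg (convex_Ici 0)
      · exact fun x _ => (hf_deriv x).differentiableAt.continuousAt.continuousWithinAt
      · intro x hx
        exact (hf_deriv x).differentiableAt.differentiableWithinAt
      · intro x hx
        rw [(hf_deriv x).deriv]
        have hx0 : (0:ℝ) ≤ x := le_of_lt (by simpa using hx)
        have h1 : (0:ℝ) ≤ Real.exp x - 1 := by
          have := Real.one_le_exp hx0; linarith
        positivity
    have h0 : hf 0 = 0 := by simp [hf]
    have := mono (Set.self_mem_Ici) hy hy
    rw [h0] at this
    simpa [hf] using this
end

section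
/- For all y ≥ 0 and all q₀, q₁ ≥ 0 with q₀ + q₁ ≤ 1: 1 − e^{−y} − 2y q₀ e^{−2y} + y(q₀ − q₁) e^{−3y} − (y q₀)²/2 · e^{−3y} ≥ 0. -/
lemma aux_g1 (y t : ℝ) (hy : 0 ≤ y) (ht0 : 0 < t) (ht1 : t ≤ 1)
    (h4 : t * (1 + y + y^2/2 + y^3/6) ≤ 1) (hl : 1 - y ≤ t) :
    0 ≤ 1 - t - 2*y*t^2 + y*t^3 - y^2/2*t^3 := by
  nlinarith [mul_pos ht0 ht0, sq_nonneg (1-t), sq_nonneg (t*(1-t)), sq_nonneg y, sq_nonneg (y*t),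
    mul_nonneg (sub_nonneg.2 h4) ht0.le, mul_nonneg (sub_nonneg.2 h4) (mul_nonneg ht0.le ht0.le),
    mul_nonneg (sub_nonneg.2 h4) hy, mul_nonneg (sub_nonneg.2 hl) hy,
    mul_nonneg (mul_nonneg (sub_nonneg.2 hl) hy) hy,
    mul_nonneg (sub_nonneg.2 h4) (sub_nonneg.2 hl),
    mul_nonneg (mul_nonneg hy ht0.le) (sub_nonneg.2 ht1)]

lemma aux_g0 (y t : ℝ) (hy : 0 ≤ y) (ht0 : 0 < t) (ht1 : t ≤ 1)
    (h1 : t * (1 + y) ≤ 1) : 0 ≤ 1 - t - y*t^3 := by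
  nlinarith [mul_nonneg (mul_nonneg hy ht0.le) (mul_nonneg (sub_nonneg.2 ht1) (add_nonneg ht0.le (le_of_lt (by linarith : (0:ℝ) < 1))))]

theorem stmt_12 (y q₀ q₁ : ℝ) (hy : 0 ≤ y) (hq₀ : 0 ≤ q₀) (hq₁ : 0 ≤ q₁)
    (hsum : q₀ + q₁ ≤ 1) :
    0 ≤ 1 - Real.exp (-y) - 2 * y * q₀ * Real.exp (-2 * y)
      + y * (q₀ - q₁) * Real.exp (-3 * y) - (y * q₀) ^ 2 / 2 * Real.exp (-3 * y) := by
  set t := Real.exp (-y) with ht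
  have ht0 : 0 < t := Real.exp_pos _
  have ht1 : t ≤ 1 := Real.exp_le_one_iff.2 (by linarith)
  have e2 : Real.exp (-2 * y) = t ^ 2 := by
    rw [ht, ← Real.exp_nat_mul]; ring_nf
  have e3 : Real.exp (-3 * y) = t ^ 3 := by
    rw [ht, ← Real.exp_nat_mul]; ring_nf
  have hinv : t * Real.exp y = 1 := by
    rw [ht, ← Real.exp_add]; simp
  have hsum4 : 1 + y + y^2/2 + y^3/6 ≤ Real.exp y := by
    have h := Real.sum_le_exp_of_nonneg hy 4
    simp [Finset.sum_range_succ] at h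
    norm_num [Nat.factorial] at h
    linarith
  have h4 : t * (1 + y + y^2/2 + y^3/6) ≤ 1 := by
    calc t * (1 + y + y^2/2 + y^3/6) ≤ t * Real.exp y :=
          mul_le_mul_of_nonneg_left hsum4 ht0.le
      _ = 1 := hinv
  have h1 : t * (1 + y) ≤ 1 := by
    nlinarith [mul_nonneg ht0.le (mul_nonneg hy (mul_nonneg hy hy)), mul_nonneg ht0.le (mul_nonneg hy hy)]
  have hl : 1 - y ≤ t := by
    have := Real.add_one_le_exp (-y); linarith
  have g0 := aux_g0 y t hy ht0 ht1 h1
  have g1 := aux_g1 y t hy ht0 ht1 h4 hl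
  rw [e2, e3]
  nlinarith [mul_nonneg (sub_nonneg.2 (by linarith : q₀ ≤ 1)) g1,
    mul_nonneg hq₀ g1, mul_nonneg (sub_nonneg.2 (by linarith : q₀ ≤ 1)) g0,
    mul_nonneg hq₀ g0,
    mul_nonneg (mul_nonneg hy (sub_nonneg.2 hsum)) (pow_nonneg ht0.le 3),
    mul_nonneg (mul_nonneg (mul_nonneg (mul_nonneg hy hy) hq₀) (sub_nonneg.2 (by linarith : q₀ ≤ 1))) (pow_nonneg ht0.le 3)]
end

section
/- The four quantities π₀ = e^{−3y}/Δ, π₁ = (e^{−2y} − e^{−3y})/Δ, π₂ = (e^{−y} − e^{−2y} − yq₀e^{−3y})/Δ, π₃ = (1 − e^{−y} − 2yq₀e^{−2y} + y(q₀−q₁)e^{−3y} − (yq₀)²/2·e^{−3y})/Δ, with Δ = 1 − 2yq₀e^{−2y} − yq₁e^{−3y} − (yq₀)²/2·e^{−3y}, are nonnegative and sum to 1, for y > 0 and q₀, q₁ ≥ 0 with q₀ + q₁ ≤ 1. -/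
set_option maxHeartbeats 1000000


theorem stmt_15 (y q₀ q₁ : ℝ) (hy : 0 < y) (hq₀ : 0 ≤ q₀) (hq₁ : 0 ≤ q₁)
    (hsum : q₀ + q₁ ≤ 1)
    (Δ π₀ π₁ π₂ π₃ : ℝ)
    (hΔ : Δ = 1 - 2 * y * q₀ * Real.exp (-2 * y) - y * q₁ * Real.exp (-3 * y)
      - (y * q₀) ^ 2 / 2 * Real.exp (-3 * y))
    (hπ₀ : π₀ = Real.exp (-3 * y) / Δ)
    (hπ₁ : π₁ = (Real.exp (-2 * y) - Real.exp (-3 * y)) / Δ)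
    (hπ₂ : π₂ = (Real.exp (-y) - Real.exp (-2 * y) - y * q₀ * Real.exp (-3 * y)) / Δ)
    (hπ₃ : π₃ = (1 - Real.exp (-y) - 2 * y * q₀ * Real.exp (-2 * y)
      + y * (q₀ - q₁) * Real.exp (-3 * y) - (y * q₀) ^ 2 / 2 * Real.exp (-3 * y)) / Δ) :
    0 ≤ π₀ ∧ 0 ≤ π₁ ∧ 0 ≤ π₂ ∧ 0 ≤ π₃ ∧ π₀ + π₁ + π₂ + π₃ = 1 := by
  set a := Real.exp (-y) with hadef
  set u := Real.exp y with hudef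
  have ha : 0 < a := Real.exp_pos _
  have hupos : 0 < u := Real.exp_pos _
  have hau : a * u = 1 := by
    rw [hadef, hudef, ← Real.exp_add]; norm_num
  have ha1 : a < 1 := by
    rw [hadef]; exact Real.exp_lt_one_iff.mpr (by linarith)
  have hu1 : 1 < u := by nlinarith
  have h2 : Real.exp (-2 * y) = a ^ 2 := by
    rw [show (-2 : ℝ) * y = -y + -y by ring, Real.exp_add, hadef, sq]
  have h3 : Real.exp (-3 * y) = a ^ 3 := by
    rw [show (-3 : ℝ) * y = -y + -y + -y by ring, Real.exp_add, Real.exp_add, hadef]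
    ring
  have hy1 : 1 + y ≤ u := by
    have := Real.add_one_le_exp y
    rw [hudef]; linarith
  have hsinh : 2 * y ≤ u - a := by
    have h := Real.self_lt_sinh_iff.mpr hy
    rw [Real.sinh_eq] at h
    rw [hadef, hudef]; linarith
  clear_value a u
  have hq0le : q₀ ≤ 1 := by linarith
  have hainv : a = u⁻¹ := eq_inv_of_mul_eq_one_left hau
  -- numerators
  have hN1 : 0 ≤ a ^ 2 - a ^ 3 := by nlinarith
  have hale : a * (1 + y) ≤ 1 := by
    calc a * (1 + y) ≤ a * u := by nlinarith
    _ = 1 := hau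
  have hN2 : 0 ≤ a - a ^ 2 - y * q₀ * a ^ 3 := by
    nlinarith [mul_nonneg (mul_nonneg hy.le hq₀) (pow_nonneg ha.le 3),
      mul_nonneg (mul_nonneg hy.le (sub_nonneg.2 hq0le)) (pow_nonneg ha.le 3),
      mul_nonneg (mul_nonneg (mul_nonneg hy.le hq₀) (pow_nonneg ha.le 2)) (sub_nonneg.2 ha1.le),
      mul_nonneg hy.le (mul_nonneg ha.le (sub_nonneg.2 ha1.le))]
  -- the key inequality for π₃ numerator
  have hQeq : 1 - a - (u - a) / 2 * (2 * a ^ 2 - a ^ 3) - ((u - a) / 2) ^ 2 * (a ^ 3 / 2)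
      = (u - 1) ^ 3 * (8 * u ^ 2 + 7 * u + 1) * a ^ 5 / 8 := by
    rw [hainv]
    field_simp
    ring
  have hQ0 : 0 ≤ 1 - a - (u - a) / 2 * (2 * a ^ 2 - a ^ 3) - ((u - a) / 2) ^ 2 * (a ^ 3 / 2) := by
    rw [hQeq]
    have h1 : (0:ℝ) ≤ (u - 1) ^ 3 := pow_nonneg (by linarith) 3
    have h2' : (0:ℝ) ≤ 8 * u ^ 2 + 7 * u + 1 := by positivity
    have h3' : (0:ℝ) ≤ a ^ 5 := by positivity
    exact div_nonneg (mul_nonneg (mul_nonneg h1 h2') h3') (by norm_num)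
  have hs : y ≤ (u - a) / 2 := by linarith
  have t1 : 0 ≤ ((u - a) / 2 - y) * (2 * a ^ 2 - a ^ 3) := by
    apply mul_nonneg (by linarith)
    linarith [mul_nonneg (mul_nonneg ha.le ha.le) (sub_nonneg.2 ha1.le), sq_nonneg a]
  have t2 : 0 ≤ (((u - a) / 2) ^ 2 - y ^ 2) * a ^ 3 := by
    apply mul_nonneg _ (by positivity)
    have h := mul_nonneg (sub_nonneg.2 hs) (by linarith : (0:ℝ) ≤ (u - a) / 2 + y)
    linarith [h]
  have hP : 0 ≤ 1 - a - 2 * y * a ^ 2 + y * a ^ 3 - y ^ 2 * a ^ 3 / 2 := by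
    linarith [hQ0, t1, t2]
  have d1 : 0 ≤ (1 - q₀) * (2 * y * a ^ 2 - 2 * y * a ^ 3) := by
    apply mul_nonneg (by linarith)
    linarith [mul_nonneg (mul_nonneg (mul_nonneg hy.le ha.le) ha.le) (sub_nonneg.2 ha1.le)]
  have d2 : 0 ≤ (1 - q₀) * (y ^ 2 * a ^ 3 * (1 + q₀) / 2) := by
    apply mul_nonneg (by linarith)
    positivity
  have hM : 0 ≤ 1 - a - 2 * y * q₀ * a ^ 2 + y * (2 * q₀ - 1) * a ^ 3
      - y ^ 2 * q₀ ^ 2 / 2 * a ^ 3 := by linarith [hP, d1, d2]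
  have e1 : 0 ≤ y * (1 - q₀ - q₁) * a ^ 3 := by
    apply mul_nonneg (mul_nonneg hy.le (by linarith)) (by positivity)
  have hN3 : 0 ≤ 1 - a - 2 * y * q₀ * a ^ 2 + y * (q₀ - q₁) * a ^ 3
      - (y * q₀) ^ 2 / 2 * a ^ 3 := by linarith [hM, e1]
  -- Δ is positive
  have hΔeq : Δ = a ^ 3 + (a ^ 2 - a ^ 3) + (a - a ^ 2 - y * q₀ * a ^ 3)
      + (1 - a - 2 * y * q₀ * a ^ 2 + y * (q₀ - q₁) * a ^ 3
        - (y * q₀) ^ 2 / 2 * a ^ 3) := by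
    rw [hΔ, h2, h3]; ring
  have hΔpos : 0 < Δ := by
    rw [hΔeq]
    have : 0 < a ^ 3 := by positivity
    linarith
  refine ⟨?_, ?_, ?_, ?_, ?_⟩
  · rw [hπ₀, h3]; positivity
  · rw [hπ₁, h2, h3]; exact div_nonneg hN1 hΔpos.le
  · rw [hπ₂, h2, h3]; exact div_nonneg hN2 hΔpos.le
  · rw [hπ₃, h2, h3]; exact div_nonneg hN3 hΔpos.le
  · rw [hπ₀, hπ₁, hπ₂, hπ₃, h2, h3, ← add_div, ← add_div,
      ← add_div]
    rw [show a ^ 3 + (a ^ 2 - a ^ 3) + (a - a ^ 2 - y * q₀ * a ^ 3)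
      + (1 - a - 2 * y * q₀ * a ^ 2 + y * (q₀ - q₁) * a ^ 3
        - (y * q₀) ^ 2 / 2 * a ^ 3) = Δ from hΔeq.symm]
    exact div_self hΔpos.ne'
end
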